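/- Adequation lemma: if a closed λ-term t has type A in System F (⊢_F t : A), then t belongs to |A|, the intersection of |A|_I over all interpretations I into saturated sets. -/
import Mathlib


/-! Untyped λ-calculus (de Bruijn) and System F realizability semantics. -/

/-- Untyped λ-terms in de Bruijn notation. -/
inductive Lam : Type
  | var : ℕ → Lam
  | app : Lam → Lam → Lam
  | lam : Lam → Lam
deriving DecidableEq

namespace Lam

/-- Shift the free variables ≥ `d` up by one. -/
def lift (d : ℕ) : Lam → Lam
  | var n => if n < d then var n else var (n + 1)
  | app t u => app (lift d t) (lift d u)
  | lam t => lam (lift (d + 1) t)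

/-- Capture-avoiding substitution of `u` for the variable `k` (de Bruijn). -/
def subst : Lam → ℕ → Lam → Lam
  | var n, k, u => if n = k then u else if k < n then var (n - 1) else var n
  | app t s, k, u => app (subst t k u) (subst s k u)
  | lam t, k, u => lam (subst t (k + 1) (lift 0 u))

/-- Free variables of a term. -/
def fv : Lam → Finset ℕ
  | var n => {n}
  | app t u => fv t ∪ fv u
  | lam t => ((fv t).erase 0).image (· - 1)

/-- One-step β-reduction. -/
inductive Beta : Lam → Lam → Prop
  | beta (t u : Lam) : Beta (app (lam t) u) (subst t 0 u)
  | appL {t t' : Lam} (u : Lam) : Beta t t' → Beta (app t u) (app t' u)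
  | appR (t : Lam) {u u' : Lam} : Beta u u' → Beta (app t u) (app t u')
  | lam {t t' : Lam} : Beta t t' → Beta (lam t) (lam t')

/-- Many-step β-reduction. -/
def BetaStar : Lam → Lam → Prop := Relation.ReflTransGen Beta

/-- β-equivalence. -/
def BetaEq : Lam → Lam → Prop := Relation.EqvGen Beta

/-- One-step η-reduction. -/
inductive Eta : Lam → Lam → Prop
  | eta (t : Lam) : Eta (lam (app (lift 0 t) (var 0))) t
  | appL {t t' : Lam} (u : Lam) : Eta t t' → Eta (app t u) (app t' u)
  | appR (t : Lam) {u u' : Lam} : Eta u u' → Eta (app t u) (app t u')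
  | lam {t t' : Lam} : Eta t t' → Eta (lam t) (lam t')

/-- βη-equivalence. -/
def BetaEtaEq : Lam → Lam → Prop := Relation.EqvGen (fun t u => Beta t u ∨ Eta t u)

/-- One-step weak head reduction: contracts the weak head redex `(λ t) u`
possibly applied to further arguments. -/
inductive Whr : Lam → Lam → Prop
  | head (t u : Lam) : Whr (app (lam t) u) (subst t 0 u)
  | appL {t t' : Lam} (u : Lam) : Whr t t' → Whr (app t u) (app t' u)

/-- Many-step weak head reduction (`≻_f`). -/
def WhrStar : Lam → Lam → Prop := Relation.ReflTransGen Whr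

/-- A term is normal when it has no β-redex. -/
def Normal (t : Lam) : Prop := ∀ u, ¬ Beta t u

def Normalizable (t : Lam) : Prop := ∃ u, BetaStar t u ∧ Normal u

/-- `(t)v₁…vₘ`. -/
def appList (t : Lam) (l : List Lam) : Lam := l.foldl app t

end Lam

/-- A set of λ-terms is saturated when it is closed under weak-head-expansion. -/
def Saturated (G : Set Lam) : Prop := ∀ t u : Lam, Lam.WhrStar t u → u ∈ G → t ∈ G

/-- A set of λ-terms is β-saturated when it is closed under β-expansion. -/
def BetaSaturated (G : Set Lam) : Prop := ∀ t u : Lam, Lam.BetaStar t u → u ∈ G → t ∈ G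

/-- `G → G' = {u : ∀ t ∈ G, (u)t ∈ G'}`. -/
def arrowSet (G G' : Set Lam) : Set Lam := {u | ∀ t ∈ G, Lam.app u t ∈ G'}

/-- Types of System F (de Bruijn type variables). -/
inductive Ty : Type
  | var : ℕ → Ty
  | arr : Ty → Ty → Ty
  | all : Ty → Ty
deriving DecidableEq

namespace Ty

/-- Shift the free type variables ≥ `d` up by one. -/
def lift (d : ℕ) : Ty → Ty
  | var n => if n < d then var n else var (n + 1)
  | arr A B => arr (lift d A) (lift d B)
  | all A => all (lift (d + 1) A)

/-- Capture-avoiding substitution of the type `C` for the type variable `k`. -/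
def subst : Ty → ℕ → Ty → Ty
  | var n, k, C => if n = k then C else if k < n then var (n - 1) else var n
  | arr A B, k, C => arr (subst A k C) (subst B k C)
  | all A, k, C => all (subst A (k + 1) (lift 0 C))

/-- Free type variables. -/
def fv : Ty → Finset ℕ
  | var n => {n}
  | arr A B => fv A ∪ fv B
  | all A => ((fv A).erase 0).image (· - 1)

end Ty

mutual
  /-- ∀⁺ types: types with positive quantifiers. -/
  inductive PosTy : Ty → Prop
    | var (n : ℕ) : PosTy (Ty.var n)
    | arr {B A : Ty} : NegTy B → PosTy A → PosTy (Ty.arr B A)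
    | all {A : Ty} : PosTy A → 0 ∈ A.fv → PosTy (Ty.all A)
  /-- ∀⁻ types: types with negative quantifiers. -/
  inductive NegTy : Ty → Prop
    | var (n : ℕ) : NegTy (Ty.var n)
    | arr {B A : Ty} : PosTy B → NegTy A → NegTy (Ty.arr B A)
end

/-- Typing contexts: a partial assignment of types to (de Bruijn) term variables. -/
def Ctx : Type := ℕ → Option Ty

def Ctx.empty : Ctx := fun _ => none

def Ctx.cons (B : Ty) (Γ : Ctx) : Ctx := fun n =>
  match n with
  | 0 => some B
  | n + 1 => Γ n

/-- Shift all type variables of a context (used for ∀-introduction: the fresh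
type variable `0` does not occur in the shifted context). -/
def Ctx.liftTy (Γ : Ctx) : Ctx := fun n => (Γ n).map (Ty.lift 0)

/-- Curry-style typing of System F. -/
inductive TyJ : Ctx → Lam → Ty → Prop
  | var {Γ : Ctx} {x : ℕ} {A : Ty} : Γ x = some A → TyJ Γ (Lam.var x) A
  | lam {Γ : Ctx} {B C : Ty} {t : Lam} :
      TyJ (Ctx.cons B Γ) t C → TyJ Γ (Lam.lam t) (Ty.arr B C)
  | app {Γ : Ctx} {B C : Ty} {u v : Lam} :
      TyJ Γ u (Ty.arr B C) → TyJ Γ v B → TyJ Γ (Lam.app u v) C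
  | allI {Γ : Ctx} {A : Ty} {t : Lam} :
      TyJ (Ctx.liftTy Γ) t A → TyJ Γ t (Ty.all A)
  | allE {Γ : Ctx} {A : Ty} {t : Lam} (C : Ty) :
      TyJ Γ t (Ty.all A) → TyJ Γ t (Ty.subst A 0 C)

/-- System F0 : System F where ∀-elimination only instantiates by type variables. -/
inductive TyJ0 : Ctx → Lam → Ty → Prop
  | var {Γ : Ctx} {x : ℕ} {A : Ty} : Γ x = some A → TyJ0 Γ (Lam.var x) A
  | lam {Γ : Ctx} {B C : Ty} {t : Lam} :
      TyJ0 (Ctx.cons B Γ) t C → TyJ0 Γ (Lam.lam t) (Ty.arr B C)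
  | app {Γ : Ctx} {B C : Ty} {u v : Lam} :
      TyJ0 Γ u (Ty.arr B C) → TyJ0 Γ v B → TyJ0 Γ (Lam.app u v) C
  | allI {Γ : Ctx} {A : Ty} {t : Lam} :
      TyJ0 (Ctx.liftTy Γ) t A → TyJ0 Γ t (Ty.all A)
  | allE {Γ : Ctx} {A : Ty} {t : Lam} (Y : ℕ) :
      TyJ0 Γ t (Ty.all A) → TyJ0 Γ t (Ty.subst A 0 (Ty.var Y))

/-- Interpretations: assignments of sets of λ-terms to type variables. -/
def Interp : Type := ℕ → Set Lam

def Interp.cons (G : Set Lam) (I : Interp) : Interp := fun n =>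
  match n with
  | 0 => G
  | n + 1 => I n

/-- Interpretation of types, parameterized by the admissibility class `C` of
sets used to interpret type variables (e.g. `Saturated`). -/
def interpC (C : Set Lam → Prop) : Ty → Interp → Set Lam
  | Ty.var n, I => I n
  | Ty.arr A B, I => arrowSet (interpC C A I) (interpC C B I)
  | Ty.all A, I => ⋂ (G : Set Lam) (_ : C G), interpC C A (Interp.cons G I)

/-- Girard–Krivine interpretation `|A|_I` with saturated sets. -/
def interp : Ty → Interp → Set Lam := interpC Saturated

/-- `|A|`, the intersection of `|A|_I` over all admissible interpretations. -/
def SemC (C : Set Lam → Prop) (A : Ty) : Set Lam :=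
  {t | ∀ I : Interp, (∀ n, C (I n)) → t ∈ interpC C A I}

/-- `|A| = ⋂_I |A|_I` over interpretations into saturated sets. -/
def Sem (A : Ty) : Set Lam := SemC Saturated A

section Adequacy

namespace Lam

/-- Lift a substitution under a binder. -/
def up (σ : ℕ → Lam) : ℕ → Lam
  | 0 => var 0
  | n+1 => lift 0 (σ n)

/-- Parallel substitution. -/
def psubst : Lam → (ℕ → Lam) → Lam
  | var n, σ => σ n
  | app t u, σ => app (psubst t σ) (psubst u σ)
  | lam t, σ => lam (psubst t (up σ))

theorem psubst_ext {σ τ : ℕ → Lam} (t : Lam) (h : ∀ n, σ n = τ n) :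
    psubst t σ = psubst t τ := by
  induction t generalizing σ τ with
  | var n => exact h n
  | app a b ih1 ih2 => simp only [psubst, app.injEq]; exact ⟨ih1 h, ih2 h⟩
  | lam a ih =>
    simp only [psubst, lam.injEq]
    exact ih (fun n => by cases n <;> simp [up, h])

theorem psubst_id (t : Lam) : psubst t (fun n => var n) = t := by
  induction t with
  | var n => rfl
  | app a b ih1 ih2 => simp [psubst, ih1, ih2]
  | lam a ih =>
    simp only [psubst, lam.injEq]
    rw [psubst_ext a (τ := fun n => var n), ih]
    intro n; cases n <;> simp [up, lift]

theorem lift_lift (u : Lam) : ∀ i d, i ≤ d → lift (d+1) (lift i u) = lift i (lift d u) := by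
  induction u with
  | var n =>
    intro i d hid
    rcases lt_or_ge n i with h | h
    · simp [lift, h, show n < d+1 by omega, show n < d by omega]
    · rcases lt_or_ge n d with h2 | h2
      · simp [lift, Nat.not_lt.2 h, h2, show n+1 < d+1 by omega, show ¬ n < i by omega]
      · simp [lift, Nat.not_lt.2 h, Nat.not_lt.2 h2, show ¬ n+1 < d+1 by omega,
          show ¬ n+1 < i by omega]
  | app a b ih1 ih2 => intro i d hid; simp [lift, ih1 _ _ hid, ih2 _ _ hid]
  | lam a ih => intro i d hid; simp [lift, ih (i+1) (d+1) (by omega)]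

theorem subst_lift_comm (s : Lam) : ∀ d k u, d ≤ k →
    subst (lift d s) (k+1) (lift d u) = lift d (subst s k u) := by
  induction s with
  | var n =>
    intro d k u hdk
    rcases lt_or_ge n d with h1 | h1
    · have h2 : n ≠ k + 1 := by omega
      have h3 : ¬ k + 1 < n := by omega
      have h4 : n ≠ k := by omega
      have h5 : ¬ k < n := by omega
      simp [lift, subst, h1, h2, h3, h4, h5]
    · rcases eq_or_ne n k with rfl | h2
      · simp [lift, subst, Nat.not_lt.2 h1]
      · rcases lt_or_ge k n with h3 | h3
        · have : ¬ n + 1 < d := by omega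
          have : ¬ n < d := by omega
          have hn1 : n - 1 ≥ d := by omega
          simp only [lift, subst, Nat.not_lt.2 h1, if_false, if_neg (show n+1 ≠ k+1 by omega),
            if_pos (show k+1 < n+1 by omega), if_pos h3, if_neg h2,
            if_neg (show ¬ n - 1 < d by omega), if_true]
          congr 1
          omega
        · -- d ≤ n < k
          simp [lift, subst, Nat.not_lt.2 h1, h2, show ¬ k < n by omega,
            show n+1 ≠ k+1 by omega, show ¬ k+1 < n+1 by omega]
  | app a b ih1 ih2 => intro d k u hdk; simp [lift, subst, ih1 _ _ _ hdk, ih2 _ _ _ hdk]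
  | lam a ih =>
    intro d k u hdk
    simp only [lift, subst, lam.injEq]
    rw [← ih (d+1) (k+1) (lift 0 u) (by omega)]
    congr 1
    exact (lift_lift u 0 d (Nat.zero_le d)).symm

theorem subst_lift_cancel (s : Lam) : ∀ d u, subst (lift d s) d u = s := by
  induction s with
  | var n =>
    intro d u
    rcases lt_or_ge n d with h | h
    · simp [lift, subst, h, Nat.ne_of_lt h, Nat.not_lt.2 (le_of_lt h)]
    · simp [lift, subst, Nat.not_lt.2 h, show n + 1 ≠ d by omega, show d < n + 1 by omega]
  | app a b ih1 ih2 => intro d u; simp [lift, subst, ih1, ih2]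
  | lam a ih => intro d u; simp [lift, subst, ih]

theorem subst_psubst (t : Lam) : ∀ (τ : ℕ → Lam) k u,
    subst (psubst t τ) k u = psubst t (fun x => subst (τ x) k u) := by
  induction t with
  | var n => intro τ k u; rfl
  | app a b ih1 ih2 => intro τ k u; simp [psubst, subst, ih1, ih2]
  | lam a ih =>
    intro τ k u
    simp only [psubst, subst, lam.injEq]
    rw [ih]
    apply psubst_ext
    intro n
    cases n with
    | zero => simp [up, subst]
    | succ m =>
      simp only [up]
      exact subst_lift_comm (τ m) 0 k (u) (Nat.zero_le k)

end Lam

section Sem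

open Lam

def insertI (k : ℕ) (G : Set Lam) (I : Interp) : Interp := fun n =>
  if n < k then I n else if n = k then G else I (n-1)

theorem cons_insertI (k : ℕ) (G H : Set Lam) (I : Interp) (n : ℕ) :
    Interp.cons H (insertI k G I) n = insertI (k+1) G (Interp.cons H I) n := by
  match n with
  | 0 => simp [Interp.cons, insertI]
  | n+1 =>
    simp only [Interp.cons, insertI]
    rcases lt_trichotomy n k with h|rfl|h
    · simp [h, show n+1 < k+1 by omega]
    · simp
    · obtain ⟨m, rfl⟩ : ∃ m, n = m+1 := ⟨n-1, by omega⟩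
      simp [show ¬ m+1 < k by omega, show m+1 ≠ k by omega, show ¬ m+1+1 < k+1 by omega,
        show m+1+1 ≠ k+1 by omega, Interp.cons]

theorem interpC_ext (C : Set Lam → Prop) (A : Ty) {I J : Interp}
    (h : ∀ n, I n = J n) : interpC C A I = interpC C A J := by
  induction A generalizing I J with
  | var n => exact h n
  | arr B B' ih1 ih2 => simp only [interpC]; rw [ih1 h, ih2 h]
  | all B ih =>
    simp only [interpC]
    refine Set.iInter₂_congr fun G hG => ih fun n => ?_
    cases n <;> simp [Interp.cons, h]

theorem whrStar_appL {t t' : Lam} (u : Lam) (h : WhrStar t t') :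
    WhrStar (Lam.app t u) (Lam.app t' u) := by
  induction h with
  | refl => exact Relation.ReflTransGen.refl
  | tail _ hstep ih => exact ih.tail (Whr.appL u hstep)

theorem saturated_interp {I : Interp} (hI : ∀ n, Saturated (I n)) (A : Ty) :
    Saturated (interpC Saturated A I) := by
  induction A generalizing I with
  | var n => exact hI n
  | arr B B' ih1 ih2 =>
    intro t u htu hu s hs
    exact ih2 hI _ _ (whrStar_appL s htu) (hu s hs)
  | all B ih =>
    intro t u htu hu
    simp only [interpC, Set.mem_iInter] at hu ⊢
    intro G hG
    have : ∀ n, Saturated ((Interp.cons G I) n) := fun n => by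
      cases n <;> simp [Interp.cons, hG, hI]
    exact ih this _ _ htu (hu G hG)

theorem interp_lift (C : Set Lam → Prop) (A : Ty) :
    ∀ (d : ℕ) (G : Set Lam) (I : Interp),
    interpC C (Ty.lift d A) (insertI d G I) = interpC C A I := by
  induction A with
  | var n =>
    intro d G I
    rcases lt_or_ge n d with h | h
    · simp [Ty.lift, h, interpC, insertI]
    · simp [Ty.lift, Nat.not_lt.2 h, interpC, insertI, show ¬ n+1 < d by omega,
        show n+1 ≠ d by omega]
  | arr B B' ih1 ih2 => intro d G I; simp only [Ty.lift, interpC]; rw [ih1, ih2]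
  | all B ih =>
    intro d G I
    simp only [Ty.lift, interpC]
    refine Set.iInter₂_congr fun H hH => ?_
    rw [interpC_ext C _ (J := insertI (d+1) G (Interp.cons H I)) (cons_insertI d G H I), ih]

theorem interp_subst (C : Set Lam → Prop) (A : Ty) :
    ∀ (k : ℕ) (B : Ty) (I : Interp),
    interpC C (Ty.subst A k B) I = interpC C A (insertI k (interpC C B I) I) := by
  induction A with
  | var n =>
    intro k B I
    rcases eq_or_ne n k with rfl | h
    · simp [Ty.subst, interpC, insertI]
    · rcases lt_or_ge k n with h2 | h2
      · simp [Ty.subst, h, h2, interpC, insertI, show ¬ n < k by omega]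
      · simp [Ty.subst, h, show ¬ k < n by omega, interpC, insertI, show n < k by omega]
  | arr B' B'' ih1 ih2 => intro k B I; simp only [Ty.subst, interpC]; rw [ih1, ih2]
  | all A' ih =>
    intro k B I
    simp only [Ty.subst, interpC]
    refine Set.iInter₂_congr fun H hH => ?_
    rw [ih]
    apply interpC_ext
    intro n
    have hlift : interpC C (Ty.lift 0 B) (Interp.cons H I) = interpC C B I := by
      rw [interpC_ext C _ (J := insertI 0 H I) ?_, interp_lift]
      intro n; cases n <;> simp [Interp.cons, insertI]
    rw [hlift]
    exact (cons_insertI k (interpC C B I) H I n).symm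

theorem adequacy_gen {Γ : Ctx} {t : Lam} {A : Ty} (ht : TyJ Γ t A) :
    ∀ (I : Interp), (∀ n, Saturated (I n)) →
    ∀ (σ : ℕ → Lam), (∀ x B, Γ x = some B → σ x ∈ interpC Saturated B I) →
    psubst t σ ∈ interpC Saturated A I := by
  induction ht with
  | var hx => intro I hI σ hσ; exact hσ _ _ hx
  | @lam Γ B C t _ ih =>
    intro I hI σ hσ
    intro u hu
    have key : Lam.subst (psubst t (up σ)) 0 u = psubst t (fun n => Nat.casesOn n u σ) := by
      rw [subst_psubst]
      apply psubst_ext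
      intro n
      cases n with
      | zero => simp [up, Lam.subst]
      | succ m => simp only [up]; exact subst_lift_cancel (σ m) 0 u
    have hmem : psubst t (fun n => Nat.casesOn n u σ) ∈ interpC Saturated C I := by
      apply ih I hI
      intro x B' hx
      cases x with
      | zero => simp only [Ctx.cons] at hx; cases hx; exact hu
      | succ m => exact hσ m B' hx
    exact saturated_interp hI C _ _
      (Relation.ReflTransGen.single (Whr.head (psubst t (up σ)) u))
      (by rw [key]; exact hmem)
  | app _ _ ih1 ih2 =>
    intro I hI σ hσ
    exact ih1 I hI σ hσ _ (ih2 I hI σ hσ)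
  | @allI Γ A t _ ih =>
    intro I hI σ hσ
    simp only [interpC, Set.mem_iInter]
    intro G hG
    have hI' : ∀ n, Saturated ((Interp.cons G I) n) := fun n => by
      cases n <;> simp [Interp.cons, hG, hI]
    apply ih _ hI'
    intro x B hx
    simp only [Ctx.liftTy, Option.map_eq_some_iff] at hx
    obtain ⟨B', hB', rfl⟩ := hx
    have : interpC Saturated (Ty.lift 0 B') (Interp.cons G I) = interpC Saturated B' I := by
      rw [interpC_ext Saturated _ (J := insertI 0 G I) ?_, interp_lift]
      intro n; cases n <;> simp [Interp.cons, insertI]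
    rw [this]
    exact hσ x B' hB'
  | @allE Γ A t C _ ih =>
    intro I hI σ hσ
    rw [interp_subst]
    have h1 := ih I hI σ hσ
    simp only [interpC, Set.mem_iInter] at h1
    have := h1 (interpC Saturated C I) (saturated_interp hI C)
    rw [interpC_ext Saturated A (J := insertI 0 (interpC Saturated C I) I) ?_] at this
    · exact this
    · intro n; cases n <;> simp [Interp.cons, insertI]

end Sem

end Adequacy


/-- adequation lemma: a closed term typable of type `A` belongs to `|A|`. -/
theorem adequation (t : Lam) (A : Ty) (hclosed : t.fv = ∅)
    (ht : TyJ Ctx.empty t A) : t ∈ Sem A := by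
  intro I hI
  have h := adequacy_gen ht I hI (fun n => Lam.var n)
    (by intro x B hx; simp [Ctx.empty] at hx)
  rwa [Lam.psubst_id] at h
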